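/- In the NFA for the status field of a non-root-level QNode, from every 'wait' state W₁, W₂, W₃, W₄, W₅ there is a path avoiding all 'timeout' edges to a lock-owning state (C₁ or V₁). -/

import Mathlib

/-- States of the NFA for the status field of a non-root-level QNode. -/
inductive S : Type
  | R1 | R2 | R3 | W1 | W2 | W3 | W4 | W5
  | C1 | P1 | P2 | P3 | VP1 | V1 | A1
deriving DecidableEq

/-- Edges of the non-root-level status NFA; the Boolean flag marks
'begin acquisition' edges. -/
inductive E : S → S → Bool → Prop
  | a1 : E .R1 .W1 true
  | a2 : E .R1 .W2 true
  | a3 : E .A1 .W1 true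
  | a4 : E .P2 .W5 true
  | a5 : E .VP1 .W3 true
  | a6 : E .C1 .W4 true
  | e1 : E .W2 .C1 false
  | e2 : E .C1 .R1 false
  | e3 : E .C1 .P2 false
  | e4 : E .P2 .R1 false
  | e5 : E .W5 .P2 false
  | e6 : E .W5 .R3 false
  | e7 : E .W5 .R2 false
  | e8 : E .R3 .C1 false
  | e9 : E .W4 .C1 false
  | e10 : E .W1 .A1 false
  | e11 : E .A1 .VP1 false
  | e12 : E .VP1 .R1 false
  | e13 : E .VP1 .P2 false
  | e14 : E .W1 .V1 false
  | e15 : E .V1 .R1 false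
  | e16 : E .V1 .P2 false
  | e17 : E .W1 .P1 false
  | e18 : E .P1 .C1 false
  | e19 : E .W3 .P2 false
  | e20 : E .W3 .P3 false
  | e21 : E .P3 .P2 false
  | e22 : E .P3 .R3 false
  | e23 : E .P3 .R2 false
  | e24 : E .W3 .R3 false
  | e25 : E .W3 .R2 false
  | e26 : E .R2 .V1 false
  | e27 : E .R2 .P1 false
  | e28 : E .R2 .A1 false


/-- The 'timeout' edges of the non-root-level status NFA. -/
inductive Timeout : S → S → Prop
  | t1 : Timeout .W1 .A1
  | t2 : Timeout .C1 .P2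
  | t3 : Timeout .V1 .P2
  | t4 : Timeout .W5 .P2
  | t5 : Timeout .W3 .P2
  | t6 : Timeout .P3 .P2
  | t7 : Timeout .VP1 .P2
  | t8 : Timeout .R2 .A1

/-! Each wait state reaches a lock-owning state in at most two non-timeout edges:
W₁ → V₁, W₂ → C₁, W₄ → C₁, and W₃, W₅ → R₃ → C₁. -/

open Relation

def NonTimeoutStep (a b : S) : Prop := (∃ f, E a b f) ∧ ¬ Timeout a b

lemma NonTimeoutStep.of_edge {a b : S} {f : Bool} (h : E a b f) (ht : ¬ Timeout a b) :
    NonTimeoutStep a b :=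
  ⟨⟨f, h⟩, ht⟩

lemma R3_reaches_C1 : ReflTransGen NonTimeoutStep .R3 .C1 :=
  .single (.of_edge .e8 nofun)

/-- Starvation freedom at a non-root level: from every wait state there is a
path avoiding all timeout edges to a lock-owning state (C₁ or V₁). -/
theorem nonroot_status_starvation_free :
    ∀ s : S, s = S.W1 ∨ s = S.W2 ∨ s = S.W3 ∨ s = S.W4 ∨ s = S.W5 →
      ∃ t : S, (t = S.C1 ∨ t = S.V1) ∧
        Relation.ReflTransGen
          (fun a b => (∃ f, E a b f) ∧ ¬ Timeout a b) s t := by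
  show ∀ s, _ → ∃ t, _ ∧ ReflTransGen NonTimeoutStep s t
  rintro s (rfl | rfl | rfl | rfl | rfl)
  · exact ⟨.V1, .inr rfl, .single (.of_edge .e14 nofun)⟩
  · exact ⟨.C1, .inl rfl, .single (.of_edge .e1 nofun)⟩
  · exact ⟨.C1, .inl rfl, .head (.of_edge .e24 nofun) R3_reaches_C1⟩
  · exact ⟨.C1, .inl rfl, .single (.of_edge .e9 nofun)⟩
  · exact ⟨.C1, .inl rfl, .head (.of_edge .e6 nofun) R3_reaches_C1⟩
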